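/- arXiv:1503.01492 — 2 statements merged into one kernel-verified Lean document; each statement's English description precedes it below -/
import Mathlib

section
/- Let k be an algebraically closed field of characteristic p > 0. There is an isomorphism of representations of C_p over k: L_2 ⊗ L_p ≅ L_p ⊕ L_p. -/
/-!
Let `σ = 1 + X` act on `L_p = k[X]/(X^p)`. Since `d/dX` kills `X^p` in characteristic `p`,
the Euler operator `T d/dT` in the variable `T = 1 + X` is well defined on `L_p`, and
`[T d/dT, T] = T` says that `A = -T d/dT` satisfies `σ A = A σ + σ`. For any such pair the shear
`u ⊗ w ↦ (u₁ w, u₀ w + u₁ A w)` is an isomorphism `L_2 ⊗ V ≅ V ⊕ V` carrying `σ₂ ⊗ σ` to `σ ⊕ σ`.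
-/

/-- The nilpotent single Jordan block of size `s` (ones on the superdiagonal). -/
def jordanN (k : Type) [Field k] (s : ℕ) : Matrix (Fin s) (Fin s) k :=
  Matrix.of fun i j => if (i : ℕ) + 1 = (j : ℕ) then 1 else 0

/-- The generator `σ` of `C_p` acting on `L_s = k^s` as the unipotent Jordan block `1 + N`. -/
def sigmaL (k : Type) [Field k] (s : ℕ) : (Fin s → k) →ₗ[k] (Fin s → k) :=
  ((1 : Matrix (Fin s) (Fin s) k) + jordanN k s).mulVecLin

open Matrix TensorProduct

section JordanBlock

variable {k : Type} [Field k]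

lemma jordanN_mulVec_apply (s : ℕ) (w : Fin s → k) (j : Fin s) :
    (jordanN k s *ᵥ w) j = if h : (j : ℕ) + 1 < s then w ⟨(j : ℕ) + 1, h⟩ else 0 := by
  simp only [jordanN, Matrix.mulVec, dotProduct, Matrix.of_apply, ite_mul, one_mul, zero_mul]
  split_ifs with h
  · have hi (i : Fin s) : ((j : ℕ) + 1 = i) ↔ (⟨(j : ℕ) + 1, h⟩ = i) := by simp [Fin.ext_iff]
    simp only [hi, Finset.sum_ite_eq, Finset.mem_univ, if_true]
  · exact Finset.sum_eq_zero fun i _ => if_neg (by omega)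

lemma sigmaL_apply (s : ℕ) (w : Fin s → k) (j : Fin s) :
    sigmaL k s w j = w j + if h : (j : ℕ) + 1 < s then w ⟨(j : ℕ) + 1, h⟩ else 0 := by
  rw [← jordanN_mulVec_apply]
  simp [sigmaL]

@[simp]
lemma sigmaL_two_apply_zero (u : Fin 2 → k) : sigmaL k 2 u 0 = u 0 + u 1 := by
  simp [sigmaL_apply]

@[simp]
lemma sigmaL_two_apply_one (u : Fin 2 → k) : sigmaL k 2 u 1 = u 1 := by
  simp [sigmaL_apply]

end JordanBlock

section Euler

/-- In the basis `e_j = X^(p-1-j)` of `k[X]/(X^p)`, in which `sigmaL k p` is multiplication by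
`1 + X`, this is `-(T d/dT) - 1` with `T = 1 + X`. -/
def eulerOp (k : Type) [Field k] (p : ℕ) : (Fin p → k) →ₗ[k] (Fin p → k) where
  toFun w j := if h : 0 < (j : ℕ) then (j : k) * (w j + w ⟨j - 1, by omega⟩) else 0
  map_add' v w := by ext j; by_cases h : 0 < (j : ℕ) <;> simp [h]; ring
  map_smul' c w := by ext j; by_cases h : 0 < (j : ℕ) <;> simp [h]; ring

variable {k : Type} [Field k]

lemma eulerOp_apply_mk_zero (p : ℕ) (w : Fin p → k) (h : 0 < p) : eulerOp k p w ⟨0, h⟩ = 0 := rfl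

lemma eulerOp_apply_succ (p n : ℕ) (w : Fin p → k) (h : n + 1 < p) :
    eulerOp k p w ⟨n + 1, h⟩ = (n + 1 : k) * (w ⟨n + 1, h⟩ + w ⟨n, by omega⟩) := by
  simp [eulerOp]

lemma sigmaL_comp_eulerOp (p : ℕ) [CharP k p] :
    sigmaL k p ∘ₗ eulerOp k p = eulerOp k p ∘ₗ sigmaL k p + sigmaL k p := by
  refine LinearMap.ext fun w => funext fun ⟨j, hj⟩ => ?_
  simp only [LinearMap.comp_apply, LinearMap.add_apply, Pi.add_apply, sigmaL_apply]
  rcases (Nat.succ_le_of_lt hj).lt_or_eq with hlt | hlast <;> rcases j with _ | n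
  · simp only [hlt, dif_pos, eulerOp_apply_mk_zero, eulerOp_apply_succ]
    ring
  · simp only [hlt, dif_pos, eulerOp_apply_succ, sigmaL_apply, show n + 1 < p by omega]
    push_cast
    ring
  · exact absurd hlast.symm (CharP.char_ne_one k p)
  · have hp : ((n + 2 : ℕ) : k) = 0 := by
      rw [show n + 2 = p by omega]
      exact CharP.cast_eq_zero k p
    push_cast at hp
    simp only [dif_pos, dite_false, eulerOp_apply_succ, sigmaL_apply, show n + 1 < p by omega,
      show ¬n + 1 + 1 < p by omega]
    linear_combination (-w ⟨n + 1, hj⟩) * hp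

end Euler

section Shear

variable {R V : Type*} [CommRing R] [AddCommGroup V] [Module R V]

def tensorFinTwoShear (A : V →ₗ[R] V) : (Fin 2 → R) ⊗[R] V ≃ₗ[R] V × V :=
  TensorProduct.comm R (Fin 2 → R) V ≪≫ₗ TensorProduct.piScalarRight R R V (Fin 2) ≪≫ₗ
    LinearEquiv.finTwoArrow R V ≪≫ₗ LinearEquiv.prodComm R V V ≪≫ₗ
    (LinearEquiv.refl R V).skewProd (LinearEquiv.refl R V) A

@[simp]
lemma tensorFinTwoShear_tmul (A : V →ₗ[R] V) (u : Fin 2 → R) (w : V) :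
    tensorFinTwoShear A (u ⊗ₜ w) = (u 1 • w, u 0 • w + u 1 • A w) := by
  simp [tensorFinTwoShear]

end Shear

section ShearIntertwines

variable {k : Type} {V : Type*} [Field k] [AddCommGroup V] [Module k V]

lemma tensorFinTwoShear_map_sigmaL {σ A : V →ₗ[k] V} (h : σ ∘ₗ A = A ∘ₗ σ + σ)
    (x : (Fin 2 → k) ⊗[k] V) :
    tensorFinTwoShear A (map (sigmaL k 2) σ x) = LinearMap.prodMap σ σ (tensorFinTwoShear A x) := by
  have h' (w : V) : σ (A w) = A (σ w) + σ w := LinearMap.congr_fun h w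
  induction x using TensorProduct.induction_on with
  | zero => simp only [map_zero]
  | tmul u w =>
    simp only [map_tmul, tensorFinTwoShear_tmul, sigmaL_two_apply_zero, sigmaL_two_apply_one,
      LinearMap.prodMap_apply, map_add, map_smul, h']
    exact Prod.ext rfl (by module)
  | add x y hx hy => simp only [map_add, hx, hy]

end ShearIntertwines

theorem stmt3_general (p : ℕ) (k : Type) [Field k] [CharP k p] :
    ∃ e : TensorProduct k (Fin 2 → k) (Fin p → k) ≃ₗ[k]
        ((Fin p → k) × (Fin p → k)),
      ∀ x, e (TensorProduct.map (sigmaL k 2) (sigmaL k p) x) =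
        (LinearMap.prodMap (sigmaL k p) (sigmaL k p)) (e x) :=
  ⟨tensorFinTwoShear (eulerOp k p), tensorFinTwoShear_map_sigmaL (sigmaL_comp_eulerOp p)⟩

/-- Over an algebraically closed field of characteristic `p > 0`,
there is an isomorphism of representations of `C_p`: `L_2 ⊗ L_p ≅ L_p ⊕ L_p`. -/
theorem stmt3 (p : ℕ) (hp : p.Prime) (k : Type) [Field k] [IsAlgClosed k] [CharP k p] :
    ∃ e : TensorProduct k (Fin 2 → k) (Fin p → k) ≃ₗ[k]
        ((Fin p → k) × (Fin p → k)),
      ∀ x, e (TensorProduct.map (sigmaL k 2) (sigmaL k p) x) =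
        (LinearMap.prodMap (sigmaL k p) (sigmaL k p)) (e x) :=
  stmt3_general p k
end

section
/- Let k be an algebraically closed field of characteristic p > 3. For every integer s with 2 ≤ s ≤ p−2, the representation L_3 is a direct summand of L_s ⊗ L_s: there exists a representation R of C_p over k with L_s ⊗ L_s ≅ L_3 ⊕ R. -/
open Finset TensorProduct
open scoped Matrix

variable {k : Type} [Field k] {s : ℕ}

variable (k s) in
def natCoord : (Fin s → k) →ₗ[k] (ℕ → k) where
  toFun v a := if h : a < s then v ⟨a, h⟩ else 0
  map_add' v w := by ext a; by_cases h : a < s <;> simp [h]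
  map_smul' c v := by ext a; by_cases h : a < s <;> simp [h]

lemma natCoord_of_lt (v : Fin s → k) {a : ℕ} (h : a < s) : natCoord k s v a = v ⟨a, h⟩ :=
  dif_pos h

lemma natCoord_of_le (v : Fin s → k) {a : ℕ} (h : s ≤ a) : natCoord k s v a = 0 :=
  dif_neg h.not_gt

lemma jordanN_mulVec_apply_s6 (v : Fin s → k) (i : Fin s) :
    (jordanN k s *ᵥ v) i = natCoord k s v (i + 1) := by
  by_cases h : (i : ℕ) + 1 < s
  · rw [natCoord_of_lt v h, Matrix.mulVec, dotProduct, sum_eq_single ⟨i + 1, h⟩]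
    · simp [jordanN]
    · intro j _ hj
      simp only [jordanN, Matrix.of_apply, ite_mul, one_mul, zero_mul]
      exact if_neg fun hij => hj (Fin.ext hij.symm)
    · simp
  · rw [natCoord_of_le v (not_lt.mp h), Matrix.mulVec, dotProduct]
    refine sum_eq_zero fun j _ => ?_
    simp only [jordanN, Matrix.of_apply, ite_mul, one_mul, zero_mul]
    exact if_neg (by omega)

lemma sigmaL_eq_one_add : sigmaL k s = 1 + (jordanN k s).mulVecLin := by
  rw [sigmaL, Matrix.mulVecLin_add, Matrix.mulVecLin_one]; rfl

lemma natCoord_sigmaL (v : Fin s → k) (a : ℕ) :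
    natCoord k s (sigmaL k s v) a = natCoord k s v a + natCoord k s v (a + 1) := by
  by_cases h : a < s
  · rw [natCoord_of_lt _ h, natCoord_of_lt _ h, sigmaL_eq_one_add, LinearMap.add_apply,
      Module.End.one_apply, Pi.add_apply, Matrix.mulVecLin_apply, jordanN_mulVec_apply_s6]
  · simp [natCoord_of_le _ (not_lt.mp h), natCoord_of_le _ (Nat.le_succ_of_le (not_lt.mp h))]

lemma det_sigmaL : LinearMap.det (sigmaL k s) = 1 := by
  rw [sigmaL, ← Matrix.toLin'_apply', LinearMap.det_toLin', Matrix.det_of_isUpperTriangular]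
  · simp [jordanN]
  · intro i j (hij : j < i)
    simp [jordanN, hij.ne', show (i : ℕ) + 1 ≠ j by omega]

section Criterion

variable {V : Type*} [AddCommGroup V] [Module k V]

variable (k) in
def HasSummandL (n : ℕ) (τ : Module.End k V) : Prop :=
  ∃ (ι : (Fin n → k) →ₗ[k] V) (π : V →ₗ[k] (Fin n → k)),
    π ∘ₗ ι = LinearMap.id ∧ ι ∘ₗ sigmaL k n = τ ∘ₗ ι ∧ π ∘ₗ τ = sigmaL k n ∘ₗ π

lemma hasSummandL_of_isUnit_comp {n : ℕ} {τ : Module.End k V}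
    (ι : (Fin n → k) →ₗ[k] V) (π : V →ₗ[k] (Fin n → k))
    (hι : ι ∘ₗ sigmaL k n = τ ∘ₗ ι) (hπ : π ∘ₗ τ = sigmaL k n ∘ₗ π)
    (hu : IsUnit (π ∘ₗ ι)) : HasSummandL k n τ := by
  obtain ⟨u, hu⟩ := hu
  have hcomm : Commute (u : Module.End k (Fin n → k)) (sigmaL k n) := by
    change _ ∘ₗ _ = _ ∘ₗ _
    rw [hu, LinearMap.comp_assoc, hι, ← LinearMap.comp_assoc, hπ, LinearMap.comp_assoc]
  refine ⟨ι, (↑u⁻¹ : Module.End k (Fin n → k)) ∘ₗ π, ?_, hι, ?_⟩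
  · rw [LinearMap.comp_assoc, ← hu]
    exact u.inv_mul
  · rw [LinearMap.comp_assoc, hπ, ← LinearMap.comp_assoc]
    exact congrArg (· ∘ₗ π) hcomm.units_inv_left.eq

variable (k) in
def chainMap (T : Module.End k V) (w : V) (n : ℕ) : (Fin n → k) →ₗ[k] V :=
  Fintype.linearCombination k fun j : Fin n => (T ^ (n - 1 - j)) w

def cochainMap (T : Module.End k V) (f : V →ₗ[k] k) (n : ℕ) : V →ₗ[k] (Fin n → k) :=
  LinearMap.pi fun i : Fin n => f ∘ₗ T ^ (i : ℕ)

lemma chainMap_comp_jordanN {T : Module.End k V} {w : V} {n : ℕ} (hw : (T ^ n) w = 0) :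
    chainMap k T w n ∘ₗ (jordanN k n).mulVecLin = T ∘ₗ chainMap k T w n := by
  refine (Pi.basisFun k (Fin n)).ext fun j => ?_
  simp only [Pi.basisFun_apply, LinearMap.comp_apply, Matrix.mulVecLin_apply,
    Matrix.mulVec_single_one, chainMap, Fintype.linearCombination_apply_single, one_smul,
    ← Module.End.mul_apply, ← pow_succ']
  rw [Fintype.linearCombination_apply]
  rcases j with ⟨_ | j, hj⟩
  · simp [jordanN, Matrix.col, Nat.sub_add_cancel hj, hw]
  · rw [sum_eq_single ⟨j, by omega⟩]
    · simp only [Matrix.col, jordanN, Matrix.transpose_apply, Matrix.of_apply,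
        ↓reduceIte, one_smul]
      congr 2
      omega
    · intro i _ hi
      simp [jordanN, Matrix.col, show (i : ℕ) ≠ j from fun h => hi (Fin.ext h)]
    · simp

lemma cochainMap_comp {T : Module.End k V} {f : V →ₗ[k] k} {n : ℕ} (hf : f ∘ₗ T ^ n = 0) :
    cochainMap T f n ∘ₗ T = (jordanN k n).mulVecLin ∘ₗ cochainMap T f n := by
  ext x i
  simp only [LinearMap.comp_apply, Matrix.mulVecLin_apply, jordanN_mulVec_apply_s6]
  by_cases h : (i : ℕ) + 1 < n
  · rw [natCoord_of_lt _ h]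
    simp [cochainMap, ← Module.End.mul_apply, ← pow_succ]
  · rw [natCoord_of_le _ (not_lt.mp h)]
    have : (i : ℕ) + 1 = n := by omega
    simpa [cochainMap, ← Module.End.mul_apply, ← pow_succ, this] using LinearMap.congr_fun hf x

lemma toMatrix'_cochainMap_comp_chainMap (T : Module.End k V) (f : V →ₗ[k] k) (w : V) (n : ℕ)
    (i j : Fin n) : LinearMap.toMatrix' (cochainMap T f n ∘ₗ chainMap k T w n) i j
      = f ((T ^ ((i : ℕ) + (n - 1 - j))) w) := by
  simp [LinearMap.toMatrix'_apply, cochainMap, chainMap, pow_add, Module.End.mul_apply]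

lemma hasSummandL_of_pow_apply_ne_zero (τ : Module.End k V) (n : ℕ) (w : V) (f : V →ₗ[k] k)
    (hw : ((τ - 1) ^ n) w = 0) (hf : f ∘ₗ (τ - 1) ^ n = 0)
    (hfw : f (((τ - 1) ^ (n - 1)) w) ≠ 0) : HasSummandL k n τ := by
  set T := τ - 1
  have hτ : τ = 1 + T := by simp [T]
  refine hasSummandL_of_isUnit_comp (chainMap k T w n) (cochainMap T f n) ?_ ?_ ?_
  · rw [sigmaL_eq_one_add, LinearMap.comp_add, chainMap_comp_jordanN hw, hτ, LinearMap.add_comp]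
    rfl
  · rw [sigmaL_eq_one_add, LinearMap.add_comp, ← cochainMap_comp hf, hτ, LinearMap.comp_add]
    rfl
  · rw [LinearMap.isUnit_iff_isUnit_det, ← LinearMap.det_toMatrix',
      Matrix.det_of_isUpperTriangular]
    · simp only [toMatrix'_cochainMap_comp_chainMap,
        show ∀ i : Fin n, (i : ℕ) + (n - 1 - i) = n - 1 by omega, prod_const]
      exact (isUnit_iff_ne_zero.mpr hfw).pow _
    · intro i j (hij : j < i)
      rw [toMatrix'_cochainMap_comp_chainMap, Module.End.pow_map_zero_of_le (by omega) hw,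
        map_zero]

end Criterion

section Coefficients

variable (k) in
def shiftSum : Module.End k (ℕ → ℕ → k) where
  toFun X a b := X (a + 1) b + X a (b + 1)
  map_add' X Y := by ext a b; simp only [Pi.add_apply]; ring
  map_smul' c X := by ext a b; simp only [Pi.smul_apply, smul_eq_mul, RingHom.id_apply]; ring

@[simp] lemma shiftSum_apply (X : ℕ → ℕ → k) (a b : ℕ) :
    shiftSum k X a b = X (a + 1) b + X a (b + 1) := rfl

def Boxed (s : ℕ) (X : ℕ → ℕ → k) : Prop := ∀ a b, s ≤ a ∨ s ≤ b → X a b = 0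

lemma Boxed.shiftSum {X : ℕ → ℕ → k} (hX : Boxed s X) : Boxed s (shiftSum k X) := by
  intro a b h
  rw [shiftSum_apply, hX _ _ (by omega), hX _ _ (by omega), add_zero]

lemma Boxed.shiftSum_pow {X : ℕ → ℕ → k} (hX : Boxed s X) (m : ℕ) :
    Boxed s ((_root_.shiftSum k ^ m) X) := by
  induction m with
  | zero => exact hX
  | succ m ih => rw [pow_succ', Module.End.mul_apply]; exact ih.shiftSum

variable (s) in
def antidiagPairing (X : ℕ → ℕ → k) : (ℕ → ℕ → k) →ₗ[k] k where
  toFun Y := ∑ a ∈ range s, ∑ b ∈ range s, X a b * Y (s - 1 - a) (s - 1 - b)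
  map_add' Y Z := by simp only [Pi.add_apply, mul_add, sum_add_distrib]
  map_smul' c Y := by
    simp only [Pi.smul_apply, smul_eq_mul, mul_sum, RingHom.id_apply]
    exact sum_congr rfl fun _ _ => sum_congr rfl fun _ _ => mul_left_comm _ _ _

lemma antidiagPairing_apply (X Y : ℕ → ℕ → k) : antidiagPairing s X Y
    = ∑ a ∈ range s, ∑ b ∈ range s, X a b * Y (s - 1 - a) (s - 1 - b) := rfl

lemma sum_range_shift_mul_reflect {R : Type*} [Semiring R] {n : ℕ} (x y : ℕ → R)
    (hx : x n = 0) (hy : y n = 0) :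
    ∑ a ∈ range n, x (a + 1) * y (n - 1 - a) = ∑ a ∈ range n, x a * y (n - 1 - a + 1) := by
  have h₁ := sum_range_succ' (fun a => x a * y (n - a)) n
  have h₂ := sum_range_succ (fun a => x a * y (n - a)) n
  simp only [hx, hy, zero_mul, mul_zero, add_zero, Nat.sub_zero] at h₁ h₂
  rw [h₁] at h₂
  refine (sum_congr rfl fun a _ => ?_).trans (h₂.trans (sum_congr rfl fun a ha => ?_))
  · rw [Nat.sub_sub, add_comm 1 a]
  · rw [show n - 1 - a + 1 = n - a by have := mem_range.mp ha; omega]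

lemma antidiagPairing_shiftSum {X Y : ℕ → ℕ → k} (hX : Boxed s X) (hY : Boxed s Y) :
    antidiagPairing s (shiftSum k X) Y = antidiagPairing s X (shiftSum k Y) := by
  simp only [antidiagPairing_apply, shiftSum_apply, add_mul, mul_add, sum_add_distrib]
  congr 1
  · rw [sum_comm, sum_comm (f := fun a b => X a b * _)]
    exact sum_congr rfl fun b _ => sum_range_shift_mul_reflect (fun a => X a b)
      (fun a => Y a (s - 1 - b)) (hX _ _ (by simp)) (hY _ _ (by simp))
  · exact sum_congr rfl fun a _ => sum_range_shift_mul_reflect (X a) (Y (s - 1 - a))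
      (hX _ _ (by simp)) (hY _ _ (by simp))

lemma antidiagPairing_shiftSum_pow {X Y : ℕ → ℕ → k} (hX : Boxed s X) (hY : Boxed s Y) (m : ℕ) :
    antidiagPairing s X ((shiftSum k ^ m) Y) = antidiagPairing s ((shiftSum k ^ m) X) Y := by
  induction m generalizing Y with
  | zero => rfl
  | succ m ih =>
    rw [pow_succ, Module.End.mul_apply, ih hY.shiftSum, ← pow_succ, pow_succ',
      Module.End.mul_apply, antidiagPairing_shiftSum (hX.shiftSum_pow m) hY]

variable (s) in
def shell (j : ℕ) (F : ℕ → ℕ → k) (a b : ℕ) : k := if a + b + j = s then F a b else 0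

lemma shiftSum_shell (j : ℕ) (F : ℕ → ℕ → k) :
    shiftSum k (shell s j F) = shell s (j + 1) (shiftSum k F) := by
  ext a b
  simp only [shiftSum_apply, shell]
  rw [show a + 1 + b + j = a + b + (j + 1) by ring, show a + (b + 1) + j = a + b + (j + 1) by ring]
  split_ifs <;> simp

lemma shiftSum_pow_shell (j m : ℕ) (F : ℕ → ℕ → k) :
    (shiftSum k ^ m) (shell s j F) = shell s (j + m) ((shiftSum k ^ m) F) := by
  induction m with
  | zero => rfl
  | succ m ih => rw [pow_succ', Module.End.mul_apply, ih, shiftSum_shell, ← add_assoc]; rfl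

end Coefficients

section TensorSquare

variable (k s) in
noncomputable def sigmaEquiv : (Fin s → k) ≃ₗ[k] (Fin s → k) :=
  LinearMap.equivOfIsUnitDet (f := sigmaL k s) (by rw [det_sigmaL]; exact isUnit_one)

variable (k s) in
noncomputable def twist (b : ℕ) : (Fin s → k) ≃ₗ[k] (Fin s → k) :=
  sigmaEquiv k s ^ ((b : ℤ) + 1 - s)

lemma twist_succ_apply (b : ℕ) (x : Fin s → k) :
    twist k s (b + 1) x = sigmaL k s (twist k s b x) := by
  rw [twist, twist, show ((b + 1 : ℕ) : ℤ) + 1 - s = 1 + ((b : ℤ) + 1 - s) by push_cast; ring,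
    zpow_one_add, LinearEquiv.mul_apply]
  exact LinearMap.equivOfIsUnitDet_apply _ _

lemma twist_sigmaL (b : ℕ) (x : Fin s → k) :
    twist k s b (sigmaL k s x) = twist k s (b + 1) x := by
  rw [twist, twist, show ((b + 1 : ℕ) : ℤ) + 1 - s = ((b : ℤ) + 1 - s) + 1 by push_cast; ring,
    zpow_add_one, LinearEquiv.mul_apply, ← LinearMap.equivOfIsUnitDet_apply]
  rfl

variable (k s) in
def colNatCoord : (Fin s → Fin s → k) →ₗ[k] (ℕ → ℕ → k) where
  toFun Ψ a b := if h : b < s then natCoord k s (Ψ ⟨b, h⟩) a else 0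
  map_add' Ψ Φ := by ext a b; by_cases h : b < s <;> simp [h]
  map_smul' c Ψ := by ext a b; by_cases h : b < s <;> simp [h]

variable (k s) in
noncomputable def twistedColumns : (Fin s → k) ⊗[k] (Fin s → k) ≃ₗ[k] (Fin s → Fin s → k) :=
  (piScalarRight k k (Fin s → k) (Fin s)).trans
    (LinearEquiv.piCongrRight fun b : Fin s => twist k s b)

variable (k s) in
noncomputable def tensorCoeffs : (Fin s → k) ⊗[k] (Fin s → k) →ₗ[k] (ℕ → ℕ → k) :=
  colNatCoord k s ∘ₗ (twistedColumns k s).toLinearMap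

lemma tensorCoeffs_tmul (x y : Fin s → k) (a b : ℕ) :
    tensorCoeffs k s (x ⊗ₜ y) a b = natCoord k s y b * natCoord k s (twist k s b x) a := by
  by_cases h : b < s
  · simp [tensorCoeffs, twistedColumns, colNatCoord, h, natCoord_of_lt y h]
  · simp [tensorCoeffs, twistedColumns, colNatCoord, h, natCoord_of_le y (not_lt.mp h)]

lemma tensorCoeffs_injective : Function.Injective (tensorCoeffs k s) := by
  rw [tensorCoeffs, LinearMap.coe_comp]
  refine Function.Injective.comp (fun Ψ Φ h => ?_) (twistedColumns k s).injective
  ext b a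
  have := congr_fun (congr_fun h a) b
  simpa [colNatCoord, natCoord_of_lt _ a.isLt] using this

lemma boxed_tensorCoeffs (u : (Fin s → k) ⊗[k] (Fin s → k)) : Boxed s (tensorCoeffs k s u) := by
  intro a b h
  by_cases hb : b < s
  · simp [tensorCoeffs, twistedColumns, colNatCoord, hb, natCoord_of_le _ (show s ≤ a by omega)]
  · simp [tensorCoeffs, twistedColumns, colNatCoord, hb]

lemma exists_tensorCoeffs_eq {X : ℕ → ℕ → k} (hX : Boxed s X) :
    ∃ u, tensorCoeffs k s u = X := by
  obtain ⟨u, hu⟩ := (twistedColumns k s).surjective fun b a => X a b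
  refine ⟨u, ?_⟩
  ext a b
  simp only [tensorCoeffs, LinearMap.comp_apply, LinearEquiv.coe_coe, hu]
  by_cases hb : b < s
  · by_cases ha : a < s
    · simp [colNatCoord, hb, natCoord_of_lt _ ha]
    · simp [colNatCoord, hb, natCoord_of_le _ (not_lt.mp ha), hX a b (by omega)]
  · simp [colNatCoord, hb, hX a b (by omega)]

lemma tensorCoeffs_comp_sub_one :
    tensorCoeffs k s ∘ₗ (map (sigmaL k s) (sigmaL k s) - 1) = shiftSum k ∘ₗ tensorCoeffs k s := by
  refine TensorProduct.ext' fun x y => ?_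
  ext a b
  simp only [LinearMap.comp_apply, LinearMap.sub_apply, map_tmul, Module.End.one_apply, map_sub,
    Pi.sub_apply, shiftSum_apply, tensorCoeffs_tmul, twist_sigmaL, twist_succ_apply,
    natCoord_sigmaL]
  ring

end TensorSquare

section Seed

/- Read `X` as `∑ X a b x^[a] y^[b]` in divided powers, so that `shiftSum` is `∂x + ∂y`; then
`seed` is a multiple of `x y (x - y)^(s - 2) = ((x + y)² - (x - y)²) (x - y)^(s - 2) / 4`, which
is killed by `(∂x + ∂y)³`. -/
variable (k s) in
def seed : ℕ → ℕ → k := shell s 0 fun a b => (-1 : k) ^ b * a * b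

lemma boxed_seed : Boxed s (seed k s) := by
  intro a b h
  simp only [seed, shell]
  split_ifs with hab
  · rcases h with h | h
    · simp [show b = 0 by omega]
    · simp [show a = 0 by omega]
  · rfl

lemma shiftSum_sq_seed :
    (shiftSum k ^ 2) (seed k s) = shell s 2 fun _ b => -2 * (-1 : k) ^ b := by
  rw [seed, shiftSum_pow_shell]
  congr 1
  ext a b
  rw [pow_two, Module.End.mul_apply]
  simp only [shiftSum_apply, pow_succ]
  push_cast
  ring

lemma shiftSum_pow_three_seed : (shiftSum k ^ 3) (seed k s) = 0 := by
  rw [pow_succ', Module.End.mul_apply, shiftSum_sq_seed, shiftSum_shell]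
  ext a b
  simp [shell, pow_succ]

lemma six_mul_sum_range_mul_sub {R : Type*} [CommRing R] (n : ℕ) :
    6 * ∑ a ∈ range n, (a : R) * (n - a) = (n - 1) * n * (n + 1) := by
  have gauss : ∀ m : ℕ, 2 * ∑ a ∈ range m, (a : R) = m * (m - 1) := by
    intro m
    induction m with
    | zero => simp
    | succ m ih => rw [sum_range_succ]; push_cast; linear_combination ih
  induction n with
  | zero => simp
  | succ n ih =>
    have split : ∑ a ∈ range n, (a : R) * (n + 1 - a)
        = ∑ a ∈ range n, (a : R) * (n - a) + ∑ a ∈ range n, (a : R) := by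
      rw [← sum_add_distrib]
      exact sum_congr rfl fun _ _ => by ring
    rw [sum_range_succ]
    push_cast
    rw [split]
    linear_combination ih + 3 * gauss n

lemma antidiagPairing_seed :
    antidiagPairing s (seed k s) ((shiftSum k ^ 2) (seed k s))
      = 2 * (-1) ^ s * ∑ a ∈ range s, (a : k) * (s - a) := by
  rw [shiftSum_sq_seed, antidiagPairing_apply, mul_sum]
  refine sum_congr rfl fun a ha => ?_
  have ha := mem_range.mp ha
  have hterm : ∀ b ∈ range s, seed k s a b * shell s 2 (fun _ b => -2 * (-1 : k) ^ b)
      (s - 1 - a) (s - 1 - b) = if b = s - a then 2 * (-1 : k) ^ s * (a * b) else 0 := by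
    intro b hb
    have hb := mem_range.mp hb
    simp only [seed, shell]
    by_cases hab : a + b = s
    · have hsign : (-1 : k) ^ s = -((-1) ^ b * (-1) ^ (s - 1 - b)) := by
        conv_lhs => rw [show s = b + (s - 1 - b) + 1 by omega]
        rw [pow_succ, pow_add]
        ring
      rw [if_pos (by omega), if_pos (by omega), if_pos (by omega), hsign]
      ring
    · rw [if_neg (by omega), zero_mul, if_neg (by omega)]
  rw [sum_congr rfl hterm, sum_ite_eq' (range s)]
  split_ifs with h
  · rw [Nat.cast_sub ha.le]
  · simp [show a = 0 by simp at h; omega]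

lemma antidiagPairing_seed_ne_zero {p : ℕ} (hp : p.Prime) [CharP k p] (hs1 : 2 ≤ s)
    (hs2 : s ≤ p - 2) : antidiagPairing s (seed k s) ((shiftSum k ^ 2) (seed k s)) ≠ 0 := by
  intro h
  have hcast : (((s - 1) * s * (s + 1) : ℕ) : k) = 0 := by
    have := six_mul_sum_range_mul_sub (R := k) s
    rw [antidiagPairing_seed] at h
    push_cast [Nat.cast_sub (show 1 ≤ s by omega)]
    have hsq : ((-1 : k) ^ s) ^ 2 = 1 := by rw [← pow_mul, pow_mul', neg_one_sq, one_pow]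
    linear_combination (-1 : k) ^ s * 3 * h - this
      - 6 * (∑ a ∈ range s, (a : k) * (s - a)) * hsq
  have hsmall : ∀ m, 0 < m → m < p → ¬p ∣ m := fun m h0 hm hd => by
    have := Nat.le_of_dvd h0 hd; omega
  rw [CharP.cast_eq_zero_iff k p, hp.dvd_mul, hp.dvd_mul] at hcast
  rcases hcast with (h | h) | h <;> exact hsmall _ (by omega) (by omega) h

end Seed

theorem hasSummandL_three_tensorSquare {p : ℕ} (hp : p.Prime) [CharP k p] (hs1 : 2 ≤ s)
    (hs2 : s ≤ p - 2) : HasSummandL k 3 (map (sigmaL k s) (sigmaL k s)) := by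
  obtain ⟨w, hw⟩ := exists_tensorCoeffs_eq (boxed_seed (k := k) (s := s))
  have hpow (m : ℕ) (u) : tensorCoeffs k s (((map (sigmaL k s) (sigmaL k s) - 1) ^ m) u)
      = (shiftSum k ^ m) (tensorCoeffs k s u) :=
    (LinearMap.congr_fun (Module.End.commute_pow_left_of_commute
      tensorCoeffs_comp_sub_one.symm m) u).symm
  refine hasSummandL_of_pow_apply_ne_zero _ 3 w (antidiagPairing s (seed k s) ∘ₗ tensorCoeffs k s)
    ?_ ?_ ?_
  · apply tensorCoeffs_injective
    rw [hpow, hw, shiftSum_pow_three_seed, map_zero]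
  · refine LinearMap.ext fun u => ?_
    rw [LinearMap.comp_apply, LinearMap.comp_apply, hpow,
      antidiagPairing_shiftSum_pow boxed_seed (boxed_tensorCoeffs u), shiftSum_pow_three_seed]
    simp [antidiagPairing_apply]
  · rw [LinearMap.comp_apply, hpow, hw]
    exact antidiagPairing_seed_ne_zero hp hs1 hs2

theorem stmt6_general (p : ℕ) (hp : p.Prime)
    (k : Type) [Field k] [CharP k p]
    (s : ℕ) (hs1 : 2 ≤ s) (hs2 : s ≤ p - 2) :
    ∃ (ι : (Fin 3 → k) →ₗ[k] TensorProduct k (Fin s → k) (Fin s → k))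
      (π : TensorProduct k (Fin s → k) (Fin s → k) →ₗ[k] (Fin 3 → k)),
      π ∘ₗ ι = LinearMap.id ∧
      ι ∘ₗ sigmaL k 3 = (TensorProduct.map (sigmaL k s) (sigmaL k s)) ∘ₗ ι ∧
      π ∘ₗ (TensorProduct.map (sigmaL k s) (sigmaL k s)) = sigmaL k 3 ∘ₗ π :=
  hasSummandL_three_tensorSquare hp hs1 hs2

/-- Over an algebraically closed field of characteristic `p > 3`,
for every `2 ≤ s ≤ p − 2`, the representation `L_3` is a direct summand of `L_s ⊗ L_s`:
there is a `C_p`-equivariant split injection `L_3 → L_s ⊗ L_s` (equivalently,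
`L_s ⊗ L_s ≅ L_3 ⊕ R` for some representation `R` of `C_p`). -/
theorem stmt6 (p : ℕ) (hp : p.Prime) (hp3 : 3 < p)
    (k : Type) [Field k] [IsAlgClosed k] [CharP k p]
    (s : ℕ) (hs1 : 2 ≤ s) (hs2 : s ≤ p - 2) :
    ∃ (ι : (Fin 3 → k) →ₗ[k] TensorProduct k (Fin s → k) (Fin s → k))
      (π : TensorProduct k (Fin s → k) (Fin s → k) →ₗ[k] (Fin 3 → k)),
      π ∘ₗ ι = LinearMap.id ∧
      ι ∘ₗ sigmaL k 3 = (TensorProduct.map (sigmaL k s) (sigmaL k s)) ∘ₗ ι ∧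
      π ∘ₗ (TensorProduct.map (sigmaL k s) (sigmaL k s)) = sigmaL k 3 ∘ₗ π :=
  stmt6_general p hp k s hs1 hs2
end
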